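/- arXiv:2010.14338 — 2 statements merged into one kernel-verified Lean document; each statement's English description precedes it below -/
import Mathlib

section
/- For any finite set Y ⊆ ℝ² and any point p ∈ Y, the number of connected components of the Manhattan graph G_{Y \ {p}} differs from the number of connected components of the Manhattan graph G_Y by at most one. -/
abbrev Pt := ℝ × ℝ
abbrev Dem := Pt × Pt

noncomputable section

/-- ℓ1 distance in the plane. -/
def dist1 (p q : Pt) : ℝ := |p.1 - q.1| + |p.2 - q.2|

/-- Two points are aligned if they are vertically or horizontally aligned. -/
def Aligned (p q : Pt) : Prop := p.1 = q.1 ∨ p.2 = q.2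

/-- `p` and `q` are Manhattan-connected in the point set `S`: the Manhattan graph on `S`
contains a rectilinear path from `p` to `q` of total length `‖p - q‖₁`. -/
def MConnected (S : Set Pt) (p q : Pt) : Prop :=
  ∃ (k : ℕ) (f : Fin (k + 1) → Pt),
    f 0 = p ∧ f (Fin.last k) = q ∧ (∀ i, f i ∈ S) ∧
    (∀ i : Fin k, Aligned (f i.castSucc) (f i.succ)) ∧
    (∑ i : Fin k, dist1 (f i.castSucc) (f i.succ)) = dist1 p q

/-- `Q` is a feasible solution for the instance `(P, D)`. -/
def MFeasible (P : Set Pt) (D : Set Dem) (Q : Set Pt) : Prop :=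
  ∀ d ∈ D, MConnected (P ∪ Q) d.1 d.2

/-- Minimum cardinality of a feasible solution. -/
def optN (P : Set Pt) (D : Set Dem) : ℕ :=
  sInf {n | ∃ Q : Finset Pt, MFeasible P D ↑Q ∧ Q.card = n}

/-- The closed axis-aligned rectangle spanned by `p` and `q`. -/
def Rect (p q : Pt) : Set Pt :=
  {z | min p.1 q.1 ≤ z.1 ∧ z.1 ≤ max p.1 q.1 ∧ min p.2 q.2 ≤ z.2 ∧ z.2 ≤ max p.2 q.2}

/-- The interior of the axis-aligned rectangle spanned by `p` and `q`. -/
def RectInt (p q : Pt) : Set Pt :=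
  {z | min p.1 q.1 < z.1 ∧ z.1 < max p.1 q.1 ∧ min p.2 q.2 < z.2 ∧ z.2 < max p.2 q.2}

/-- The four corners of the rectangle spanned by `p` and `q`. -/
def Corners (p q : Pt) : Set Pt := {(p.1, p.2), (p.1, q.2), (q.1, p.2), (q.1, q.2)}

/-- Two demand rectangles are non-conflicting if neither contains a corner of the other
in its interior. -/
def NonConflicting (d e : Dem) : Prop :=
  (∀ c ∈ Corners e.1 e.2, c ∉ RectInt d.1 d.2) ∧
  (∀ c ∈ Corners d.1 d.2, c ∉ RectInt e.1 e.2)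

/-- `IRN D` : maximum cardinality of an independent (pairwise non-conflicting) subset of `D`. -/
def IRN (D : Set Dem) : ℕ :=
  sSup {n | ∃ D' : Finset Dem, ↑D' ⊆ D ∧ D'.card = n ∧
    ∀ d ∈ D', ∀ e ∈ D', d ≠ e → NonConflicting d e}

/-- The vertical segment at `x = a` spanning the `y`-range between `y1` and `y2`. -/
def VSeg (a y1 y2 : ℝ) : Set Pt :=
  {z | z.1 = a ∧ min y1 y2 ≤ z.2 ∧ z.2 ≤ max y1 y2}

/-- A finite set of demands is vertically separable: its demand rectangles can be ordered
`R₁, …, R_k` with vertical segments `ℓ₁, …, ℓ_k`, where `ℓᵢ` connects the interior of the top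
boundary of `Rᵢ` with the interior of its bottom boundary and avoids `R_j` for all `j > i`. -/
def VertSeparable (D' : Finset Dem) : Prop :=
  ∃ (e : Fin D'.card → Dem) (a : Fin D'.card → ℝ),
    Function.Injective e ∧ (∀ i, e i ∈ D') ∧
    (∀ i, min (e i).1.1 (e i).2.1 < a i ∧ a i < max (e i).1.1 (e i).2.1) ∧
    ∀ i j : Fin D'.card, i < j →
      VSeg (a i) (e i).1.2 (e i).2.2 ∩ Rect (e j).1 (e j).2 = ∅

/-- `VSN D` : maximum cardinality of a vertically separable subset of `D`. -/
def VSN (D : Set Dem) : ℕ :=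
  sSup {n | ∃ D' : Finset Dem, ↑D' ⊆ D ∧ D'.card = n ∧ VertSeparable D'}

/-- `λ(p,q)` : the left vertical side of the demand rectangle `R(p,q)`. -/
def LSeg (d : Dem) : Set Pt := VSeg d.1.1 d.1.2 d.2.2

/-- `ρ(p,q)` : the right vertical side of the demand rectangle `R(p,q)`. -/
def RSeg (d : Dem) : Set Pt := VSeg d.2.1 d.1.2 d.2.2

/-- A left boundary independent set: the left sides are pairwise non-overlapping. -/
def LeftBIS (D' : Finset Dem) : Prop :=
  ∀ d ∈ D', ∀ e ∈ D', d ≠ e → Set.Subsingleton (LSeg d ∩ LSeg e)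

/-- A right boundary independent set: the right sides are pairwise non-overlapping. -/
def RightBIS (D' : Finset Dem) : Prop :=
  ∀ d ∈ D', ∀ e ∈ D', d ≠ e → Set.Subsingleton (RSeg d ∩ RSeg e)

/-- `ISN D` : maximum cardinality of a (left or right) boundary independent subset of `D`. -/
def ISN (D : Set Dem) : ℕ :=
  sSup {n | ∃ D' : Finset Dem, ↑D' ⊆ D ∧ D'.card = n ∧ (LeftBIS D' ∨ RightBIS D')}

/-- `(P, D)` is a MinGMConn instance: demands are between input points, ordered by
`x`-coordinate. -/
def IsInstance (P : Finset Pt) (D : Finset Dem) : Prop :=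
  ∀ d ∈ D, d.1 ∈ P ∧ d.2 ∈ P ∧ d.1.1 < d.2.1

/-- The points of `P` have pairwise distinct `x`-coordinates. -/
def DistinctX (P : Finset Pt) : Prop := ∀ p ∈ P, ∀ q ∈ P, p ≠ q → p.1 ≠ q.1

/-- The points of `P` have pairwise distinct `y`-coordinates. -/
def DistinctY (P : Finset Pt) : Prop := ∀ p ∈ P, ∀ q ∈ P, p ≠ q → p.2 ≠ q.2

end

noncomputable section

/-- The `i`-th open vertical strip determined by boundaries `b` (with `b 0 = ⊥`, `b s = ⊤`). -/
def strip (s : ℕ) (b : Fin (s + 1) → EReal) (i : Fin s) : Set Pt :=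
  {z | b i.castSucc < (z.1 : EReal) ∧ (z.1 : EReal) < b i.succ}

/-- `b` describes a strip subdivision into `s` vertical strips via `s - 1` vertical lines,
none of which passes through a point of `P`. -/
def IsStripSubdivision (s : ℕ) (b : Fin (s + 1) → EReal) (P : Finset Pt) : Prop :=
  1 ≤ s ∧ StrictMono b ∧ b 0 = ⊥ ∧ b (Fin.last s) = ⊤ ∧
    ∀ p ∈ P, ∀ i : Fin (s + 1), (p.1 : EReal) ≠ b i

/-- The projections `π_𝒮(P)` of the points of `P` onto the adjacent strip boundaries. -/
def stripProj (s : ℕ) (b : Fin (s + 1) → EReal) (P : Set Pt) : Set Pt :=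
  {z | ∃ p ∈ P, ∃ i : Fin s, p ∈ strip s b i ∧
    ((i.val ≠ 0 ∧ z = ((b i.castSucc).toReal, p.2)) ∨
     (i.val + 1 ≠ s ∧ z = ((b i.succ).toReal, p.2)))}

/-- The demand set `π_𝒮(D)` of the inter-strip instance: demands between points in
different, non-adjacent strips, projected to the adjacent strip boundaries. -/
def stripDem (s : ℕ) (b : Fin (s + 1) → EReal) (D : Set Dem) : Set Dem :=
  {d | ∃ pq ∈ D, ∃ i j : Fin s,
    pq.1 ∈ strip s b i ∧ pq.2 ∈ strip s b j ∧ i.val + 2 ≤ j.val ∧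
    d = (((b i.succ).toReal, pq.1.2), ((b j.castSucc).toReal, pq.2.2))}

/-- `p 0, …, p n` form a triangular instance of size `n` :
`x`-coordinates strictly increasing, while `p 1, …, p n` form a descending diagonal
lying to the top-right of `p 0`. -/
def IsTriangular (n : ℕ) (p : Fin (n + 1) → Pt) : Prop :=
  (∀ i j : Fin (n + 1), i < j → (p i).1 < (p j).1) ∧
  (∀ i j : Fin (n + 1), i ≠ 0 → i < j → (p j).2 < (p i).2) ∧
  (∀ i : Fin (n + 1), i ≠ 0 → (p 0).2 < (p i).2)

/-- The point set of a triangular instance. -/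
def triP (n : ℕ) (p : Fin (n + 1) → Pt) : Finset Pt := Finset.image p Finset.univ

/-- The demand set of a triangular instance: `(p 0, p i)` for `1 ≤ i ≤ n`. -/
def triD (n : ℕ) (p : Fin (n + 1) → Pt) : Finset Dem :=
  Finset.image (fun i => (p 0, p i)) (Finset.univ.filter fun i : Fin (n + 1) => i ≠ 0)

/-- The triangular grid of a triangular instance. -/
def triGrid (n : ℕ) (p : Fin (n + 1) → Pt) : Set Pt :=
  {z | (∃ i, z.1 = (p i).1) ∧ (∃ j, z.2 = (p j).2) ∧
    ∃ i : Fin (n + 1), i ≠ 0 ∧ z ∈ Rect (p 0) (p i)}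

/-- `Q` is arboreally satisfied: for every non-aligned pair of its points, the rectangle
they span contains a third point of `Q`. -/
def ArboreallySatisfied (Q : Finset Pt) : Prop :=
  ∀ p ∈ Q, ∀ q ∈ Q, ¬ Aligned p q → ∃ r ∈ Q, r ≠ p ∧ r ≠ q ∧ r ∈ Rect p q

/-- The Manhattan graph on a finite point set `S`. -/
def manhattanGraph (S : Finset Pt) : SimpleGraph {x : Pt // x ∈ S} where
  Adj a b := a ≠ b ∧ Aligned a.1 b.1
  symm := ⟨fun _ _ h => ⟨h.1.symm, h.2.imp Eq.symm Eq.symm⟩⟩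
  loopless := ⟨fun _ h => h.1 rfl⟩

/-- The demand graph of an instance `(P, D)`. -/
def demandGraph (P : Finset Pt) (D : Finset Dem) : SimpleGraph {x : Pt // x ∈ P} where
  Adj a b := a ≠ b ∧ (((a : Pt), (b : Pt)) ∈ D ∨ ((b : Pt), (a : Pt)) ∈ D)
  symm := ⟨fun _ _ h => ⟨h.1.symm, h.2.symm⟩⟩
  loopless := ⟨fun _ h => h.1 rfl⟩

/-- `C` is an axis-aligned rectangle: a product of two intervals. -/
def IsAxisRect (C : Set Pt) : Prop :=
  ∃ I J : Set ℝ, I.OrdConnected ∧ J.OrdConnected ∧ C = I ×ˢ J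

end

/-! A vertex `v` whose neighbourhood is covered by two cliques lies in a single component `C`;
every component of `G - v` inside `C` contains a neighbour of `v`, and all neighbours in one
clique are mutually reachable, so `C` splits into at most two components while the other
components are unchanged. In the Manhattan graph the two cliques are the vertical and the
horizontal line through the deleted point. -/

namespace SimpleGraph

variable {V : Type*} {G : SimpleGraph V} {v : V}

lemma reachable_induce_compl_singleton_of_not_reachable {a b : ({v}ᶜ : Set V)}
    (hab : G.Reachable a b) (hav : ¬ G.Reachable a v) :
    (G.induce {v}ᶜ).Reachable a b := by
  classical
  obtain ⟨w⟩ := hab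
  have hw : ∀ x ∈ w.support, x ∈ ({v}ᶜ : Set V) := by
    rintro x hx rfl
    exact hav ⟨w.takeUntil _ hx⟩
  exact ⟨w.induce _ hw⟩

lemma exists_adj_reachable_induce_compl_singleton {a : V} (ha : a ≠ v) (hav : G.Reachable a v) :
    ∃ x : ({v}ᶜ : Set V), G.Adj x v ∧ (G.induce {v}ᶜ).Reachable ⟨a, ha⟩ x := by
  obtain ⟨w⟩ := hav
  induction w with
  | nil => exact absurd rfl ha
  | @cons a b v hab w ih =>
    by_cases hb : b = v
    · exact ⟨⟨a, ha⟩, hb ▸ hab, .rfl⟩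
    · obtain ⟨x, hxv, hx⟩ := ih hb
      exact ⟨x, hxv, (induce_adj.2 hab : (G.induce {v}ᶜ).Adj ⟨a, ha⟩ ⟨b, hb⟩).reachable.trans hx⟩

lemma IsClique.reachable_induce {S s : Set V} (hS : G.IsClique S) {x y : s} (hx : x.1 ∈ S)
    (hy : y.1 ∈ S) : (G.induce s).Reachable x y := by
  obtain rfl | hxy := eq_or_ne x y
  · rfl
  · exact Adj.reachable (hS hx hy (Subtype.coe_ne_coe.2 hxy))

lemma reachable_induce_compl_singleton_or_adj {a b : ({v}ᶜ : Set V)} (hab : G.Reachable a b) :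
    (G.induce {v}ᶜ).Reachable a b ∨ ∃ x y : ({v}ᶜ : Set V), G.Adj x v ∧ G.Adj y v ∧
      (G.induce {v}ᶜ).Reachable a x ∧ (G.induce {v}ᶜ).Reachable b y := by
  by_cases hav : G.Reachable a v
  · obtain ⟨x, hxv, hax⟩ := exists_adj_reachable_induce_compl_singleton a.2 hav
    obtain ⟨y, hyv, hby⟩ := exists_adj_reachable_induce_compl_singleton b.2 (hab.symm.trans hav)
    exact .inr ⟨x, y, hxv, hyv, hax, hby⟩
  · exact .inl (reachable_induce_compl_singleton_of_not_reachable hab hav)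

variable [Finite V]

theorem card_connectedComponent_le_card_induce_compl_singleton_add_one (v : V) :
    Nat.card G.ConnectedComponent ≤ Nat.card (G.induce {v}ᶜ).ConnectedComponent + 1 := by
  let f : Option (G.induce {v}ᶜ).ConnectedComponent → G.ConnectedComponent := fun
    | none => G.connectedComponentMk v
    | some C => C.map (Embedding.induce _).toHom
  have hf : f.Surjective := by
    refine ConnectedComponent.ind fun x => ?_
    by_cases hx : x = v
    · exact ⟨none, by rw [hx]⟩
    · exact ⟨some ((G.induce {v}ᶜ).connectedComponentMk ⟨x, hx⟩), rfl⟩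
  calc Nat.card G.ConnectedComponent
      ≤ Nat.card (Option (G.induce {v}ᶜ).ConnectedComponent) :=
        Nat.card_le_card_of_surjective f hf
    _ = _ := Finite.card_option

theorem card_connectedComponent_induce_compl_singleton_le_add_one {A B : Set V}
    (hA : G.IsClique A) (hB : G.IsClique B) (hv : G.neighborSet v ⊆ A ∪ B) :
    Nat.card (G.induce {v}ᶜ).ConnectedComponent ≤ Nat.card G.ConnectedComponent + 1 := by
  classical
  set H := G.induce {v}ᶜ
  let meetsA (C : H.ConnectedComponent) : Prop :=
    ∃ x : ({v}ᶜ : Set V), G.Adj x v ∧ x.1 ∈ A ∧ H.connectedComponentMk x = C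
  let f (C : H.ConnectedComponent) : Option G.ConnectedComponent :=
    if meetsA C then none else some (C.map (Embedding.induce _).toHom)
  have hf : f.Injective := by
    refine ConnectedComponent.ind₂ fun a b hab => ?_
    by_cases ha : meetsA (H.connectedComponentMk a) <;>
      by_cases hb : meetsA (H.connectedComponentMk b) <;> simp only [f, ha, hb, if_true, if_false,
        reduceCtorEq, Option.some_inj] at hab
    · obtain ⟨x, -, hxA, hx⟩ := ha
      obtain ⟨y, -, hyA, hy⟩ := hb
      rw [← hx, ← hy]
      exact ConnectedComponent.sound (hA.reachable_induce hxA hyA)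
    · rw [ConnectedComponent.map_mk, ConnectedComponent.map_mk, ConnectedComponent.eq] at hab
      obtain hab | ⟨x, y, hxv, hyv, hax, hby⟩ := reachable_induce_compl_singleton_or_adj hab
      · exact ConnectedComponent.sound hab
      have hB_of_not_meetsA {c z : ({v}ᶜ : Set V)} (hc : ¬ meetsA (H.connectedComponentMk c))
          (hzv : G.Adj z v) (hcz : H.Reachable c z) : z.1 ∈ B :=
        (hv hzv.symm).resolve_left fun hzA =>
          hc ⟨z, hzv, hzA, (ConnectedComponent.sound hcz).symm⟩
      exact ConnectedComponent.sound <| hax.trans <|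
        (hB.reachable_induce (hB_of_not_meetsA ha hxv hax) (hB_of_not_meetsA hb hyv hby)).trans
          hby.symm
  calc Nat.card H.ConnectedComponent
      ≤ Nat.card (Option G.ConnectedComponent) := Nat.card_le_card_of_injective f hf
    _ = _ := Finite.card_option

end SimpleGraph

section Manhattan

open SimpleGraph

variable (Y : Finset Pt)

lemma manhattanGraph_isClique_fst_eq (c : ℝ) :
    (manhattanGraph Y).IsClique {x | x.1.1 = c} :=
  fun _ hx _ hy hxy => ⟨hxy, .inl (hx.trans hy.symm)⟩

lemma manhattanGraph_isClique_snd_eq (c : ℝ) :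
    (manhattanGraph Y).IsClique {x | x.1.2 = c} :=
  fun _ hx _ hy hxy => ⟨hxy, .inr (hx.trans hy.symm)⟩

lemma manhattanGraph_neighborSet_subset (x : {x : Pt // x ∈ Y}) :
    (manhattanGraph Y).neighborSet x ⊆ {y | y.1.1 = x.1.1} ∪ {y | y.1.2 = x.1.2} :=
  fun _ hy => hy.2.imp Eq.symm Eq.symm

def manhattanGraphEraseIso {p : Pt} (hp : p ∈ Y) :
    manhattanGraph (Y.erase p) ≃g (manhattanGraph Y).induce {⟨p, hp⟩}ᶜ where
  toFun x := ⟨⟨x.1, Finset.mem_of_mem_erase x.2⟩,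
    fun h => Finset.ne_of_mem_erase x.2 (congrArg Subtype.val h)⟩
  invFun x := ⟨x.1.1, Finset.mem_erase.2 ⟨fun h => x.2 (Subtype.ext h), x.1.2⟩⟩
  left_inv _ := rfl
  right_inv _ := rfl
  map_rel_iff' {a b} := by
    simp only [induce_adj, manhattanGraph, Equiv.coe_fn_mk, ne_eq, Subtype.mk.injEq]
    rw [← Subtype.val_inj (a := a)]

end Manhattan

/-- Removing a point from a finite point set changes the number of connected
components of its Manhattan graph by at most one. -/
theorem stmt17 (Y : Finset Pt) (p : Pt) (hp : p ∈ Y) :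
    Nat.card (manhattanGraph (Y.erase p)).ConnectedComponent ≤
      Nat.card (manhattanGraph Y).ConnectedComponent + 1 ∧
    Nat.card (manhattanGraph Y).ConnectedComponent ≤
      Nat.card (manhattanGraph (Y.erase p)).ConnectedComponent + 1 := by
  rw [Nat.card_congr (manhattanGraphEraseIso Y hp).connectedComponentEquiv]
  exact ⟨SimpleGraph.card_connectedComponent_induce_compl_singleton_le_add_one
      (manhattanGraph_isClique_fst_eq Y p.1) (manhattanGraph_isClique_snd_eq Y p.2)
      (manhattanGraph_neighborSet_subset Y ⟨p, hp⟩),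
    SimpleGraph.card_connectedComponent_le_card_induce_compl_singleton_add_one _⟩
end

section
/- Let (P,D) be a MinGMConn instance, let Q be a feasible solution for (P,D), and let C ⊆ ℝ² be an axis-aligned rectangle (a product of two intervals). Then Q ∩ C is a feasible solution for the instance (P ∩ C, D ∩ (C × C)). Consequently, for any finite family C₁,…,C_m of pairwise disjoint axis-aligned rectangles, opt(P,D) ≥ Σ_{i=1}^{m} opt(P ∩ C_i, D ∩ (C_i × C_i)). -/
/-!
A rectilinear path whose length equals the ℓ1-distance of its endpoints stays in the rectangle
they span, hence in every axis-parallel rectangle containing both endpoints. Restricting an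
optimal solution to pairwise disjoint rectangles therefore gives feasible solutions of the
subinstances whose sizes add up to at most the optimum.
-/

lemma dist1_triangle (p q r : Pt) : dist1 p r ≤ dist1 p q + dist1 q r := by
  unfold dist1
  linarith [abs_sub_le p.1 q.1 r.1, abs_sub_le p.2 q.2 r.2]

@[simp]
lemma dist1_self (p : Pt) : dist1 p p = 0 := by simp [dist1]

lemma mem_uIcc_of_abs_sub_add_abs_sub_eq {a b c : ℝ} (h : |a - b| + |b - c| = |a - c|) :
    b ∈ Set.uIcc a c := by
  rw [← segment_eq_uIcc, mem_segment_iff_wbtw, ← dist_add_dist_eq_iff]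
  simpa only [Real.dist_eq] using h

lemma mem_rect_of_dist1_add_eq {p q z : Pt} (h : dist1 p z + dist1 z q = dist1 p q) :
    z ∈ Rect p q := by
  unfold dist1 at h
  have hx := abs_sub_le p.1 z.1 q.1
  have hy := abs_sub_le p.2 z.2 q.2
  obtain ⟨hx₁, hx₂⟩ := mem_uIcc_of_abs_sub_add_abs_sub_eq (a := p.1) (b := z.1) (c := q.1)
    (by linarith)
  obtain ⟨hy₁, hy₂⟩ := mem_uIcc_of_abs_sub_add_abs_sub_eq (a := p.2) (b := z.2) (c := q.2)
    (by linarith)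
  exact ⟨hx₁, hx₂, hy₁, hy₂⟩

lemma dist1_add_dist1_le_sum_dist1 : ∀ {k : ℕ} (f : Fin (k + 1) → Pt) (i : Fin (k + 1)),
    dist1 (f 0) (f i) + dist1 (f i) (f (Fin.last k)) ≤
      ∑ j : Fin k, dist1 (f j.castSucc) (f j.succ)
  | 0, f, i => by simp [Fin.fin_one_eq_zero i, dist1]
  | k + 1, f, i => by
    have ih := dist1_add_dist1_le_sum_dist1 (fun j => f j.succ)
    simp only [Fin.succ_last, Fin.succ_zero_eq_one, Fin.succ_castSucc] at ih
    rw [Fin.sum_univ_succ]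
    simp only [Fin.castSucc_zero, Fin.succ_zero_eq_one]
    induction i using Fin.cases with
    | zero =>
      have := ih 0
      simp only [Fin.succ_zero_eq_one, dist1_self, zero_add] at this ⊢
      linarith [dist1_triangle (f 0) (f 1) (f (Fin.last (k + 1)))]
    | succ i =>
      have := ih i
      linarith [dist1_triangle (f 0) (f 1) (f i.succ)]

lemma MConnected.mono {S T : Set Pt} {p q : Pt} (h : MConnected S p q) (hST : S ⊆ T) :
    MConnected T p q := by
  obtain ⟨k, f, h₀, hₗ, hmem, hal, hlen⟩ := h
  exact ⟨k, f, h₀, hₗ, fun i => hST (hmem i), hal, hlen⟩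

lemma MConnected.inter_rect {S : Set Pt} {p q : Pt} (h : MConnected S p q) :
    MConnected (S ∩ Rect p q) p q := by
  obtain ⟨k, f, h₀, hₗ, hmem, hal, hlen⟩ := h
  refine ⟨k, f, h₀, hₗ, fun i => ⟨hmem i, mem_rect_of_dist1_add_eq ?_⟩, hal, hlen⟩
  subst h₀ hₗ
  exact le_antisymm (hlen ▸ dist1_add_dist1_le_sum_dist1 f i) (dist1_triangle _ _ _)

lemma IsAxisRect.rect_subset {C : Set Pt} (hC : IsAxisRect C) {p q : Pt} (hp : p ∈ C)
    (hq : q ∈ C) : Rect p q ⊆ C := by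
  obtain ⟨I, J, hI, hJ, rfl⟩ := hC
  rintro z ⟨hz₁, hz₂, hz₃, hz₄⟩
  exact ⟨hI.uIcc_subset hp.1 hq.1 ⟨hz₁, hz₂⟩, hJ.uIcc_subset hp.2 hq.2 ⟨hz₃, hz₄⟩⟩

lemma MFeasible.inter_axisRect {P Q C : Set Pt} {D : Set Dem} (hQ : MFeasible P D Q)
    (hC : IsAxisRect C) : MFeasible (P ∩ C) {d : Dem | d ∈ D ∧ d.1 ∈ C ∧ d.2 ∈ C} (Q ∩ C) := by
  rintro d ⟨hd, hd₁, hd₂⟩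
  rw [← Set.union_inter_distrib_right]
  exact (hQ d hd).inter_rect.mono (Set.inter_subset_inter_right _ (hC.rect_subset hd₁ hd₂))

lemma optN_le_card {P : Set Pt} {D : Set Dem} {Q : Finset Pt} (hQ : MFeasible P D ↑Q) :
    optN P D ≤ Q.card :=
  Nat.sInf_le ⟨Q, hQ, rfl⟩

lemma exists_mFeasible_card_eq_optN {P : Set Pt} {D : Set Dem} {Q : Finset Pt}
    (hQ : MFeasible P D ↑Q) : ∃ Q₀ : Finset Pt, MFeasible P D ↑Q₀ ∧ Q₀.card = optN P D := by
  have hne : {n | ∃ Q : Finset Pt, MFeasible P D ↑Q ∧ Q.card = n}.Nonempty := ⟨_, Q, hQ, rfl⟩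
  exact Nat.sInf_mem hne

lemma Finset.sum_card_filter_mem_le_card {α ι : Type*} [Fintype ι] [DecidableEq α]
    (s : Finset α) {C : ι → Set α} [∀ i, DecidablePred (· ∈ C i)]
    (hC : Pairwise fun i j => Disjoint (C i) (C j)) :
    ∑ i, (s.filter (· ∈ C i)).card ≤ s.card := by
  rw [← Finset.card_biUnion]
  · exact Finset.card_le_card (Finset.biUnion_subset.mpr fun _ _ => Finset.filter_subset _ _)
  · exact fun i _ j _ hij => Finset.disjoint_filter_filter' _ _ (hC hij)

lemma sum_optN_inter_le_optN {P : Set Pt} {D : Set Dem} {Q : Finset Pt}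
    (hQ : MFeasible P D ↑Q) {ι : Type*} [Fintype ι] {C : ι → Set Pt}
    (hC : ∀ i, IsAxisRect (C i)) (hdisj : Pairwise fun i j => Disjoint (C i) (C j)) :
    ∑ i, optN (P ∩ C i) {d : Dem | d ∈ D ∧ d.1 ∈ C i ∧ d.2 ∈ C i} ≤ optN P D := by
  classical
  obtain ⟨Q₀, hQ₀, hcard⟩ := exists_mFeasible_card_eq_optN hQ
  calc ∑ i, optN (P ∩ C i) {d : Dem | d ∈ D ∧ d.1 ∈ C i ∧ d.2 ∈ C i}
      ≤ ∑ i, (Q₀.filter (· ∈ C i)).card :=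
        Finset.sum_le_sum fun i _ => optN_le_card (by
          rw [Finset.coe_filter]; exact hQ₀.inter_axisRect (hC i))
    _ ≤ Q₀.card := Q₀.sum_card_filter_mem_le_card hdisj
    _ = optN P D := hcard

theorem stmt18_general (P : Finset Pt) (D : Finset Dem)
    (Q : Finset Pt) (hQ : MFeasible ↑P ↑D ↑Q)
    (C : Set Pt) (hC : IsAxisRect C) :
    MFeasible (↑P ∩ C) {d : Dem | d ∈ D ∧ d.1 ∈ C ∧ d.2 ∈ C} (↑Q ∩ C) ∧
    ∀ (m : ℕ) (Cf : Fin m → Set Pt),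
      (∀ i, IsAxisRect (Cf i)) →
      (Pairwise fun i j => Disjoint (Cf i) (Cf j)) →
      ∑ i : Fin m, optN (↑P ∩ Cf i) {d : Dem | d ∈ D ∧ d.1 ∈ Cf i ∧ d.2 ∈ Cf i}
        ≤ optN ↑P ↑D :=
  ⟨hQ.inter_axisRect hC, fun _ _ hCf hdisj => sum_optN_inter_le_optN hQ hCf hdisj⟩

/-- Restricting a feasible solution to an axis-aligned rectangle `C` yields a
feasible solution of the restricted instance; consequently, for pairwise disjoint axis-aligned
rectangles, `opt(P,D) ≥ Σᵢ opt(P ∩ Cᵢ, D ∩ (Cᵢ × Cᵢ))`. -/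
theorem stmt18 (P : Finset Pt) (D : Finset Dem) (hinst : IsInstance P D)
    (Q : Finset Pt) (hQ : MFeasible ↑P ↑D ↑Q)
    (C : Set Pt) (hC : IsAxisRect C) :
    MFeasible (↑P ∩ C) {d : Dem | d ∈ D ∧ d.1 ∈ C ∧ d.2 ∈ C} (↑Q ∩ C) ∧
    ∀ (m : ℕ) (Cf : Fin m → Set Pt),
      (∀ i, IsAxisRect (Cf i)) →
      (Pairwise fun i j => Disjoint (Cf i) (Cf j)) →
      ∑ i : Fin m, optN (↑P ∩ Cf i) {d : Dem | d ∈ D ∧ d.1 ∈ Cf i ∧ d.2 ∈ Cf i}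
        ≤ optN ↑P ↑D :=
  stmt18_general P D Q hQ C hC
end
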